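/- arXiv:1409.7808 — 2 statements merged into one kernel-verified Lean document; each statement's English description precedes it below -/
import Mathlib

section
/- Let f:[0,N]→ℝ with f(x) = (e₁x + e₂x²)/(Λ + c₀x), where Λ, c₀ > 0, e₁, e₂ ≥ 0 and Λe₂ ≥ c₀e₁, and let X be a random variable in [0,N] with mean μ. Then E[f(X)] ≤ f(μ) + f''(0)·Var(X)/2, where f''(0) = 2(Λe₂ - c₀e₁)/Λ². -/
/-! The rational function `f x = (e₁ x + e₂ x²) / (Λ + c₀ x)` has `f''` nonnegative and decreasing
on `[0, ∞)`, so `f` lies below its tangent line at any `m ≥ 0` plus `f''(0)/2 · (x - m)²`;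
explicitly, the gap is `(Λ e₂ - c₀ e₁) (x - m)²` times `1/Λ² - Λ / ((Λ + c₀ x)(Λ + c₀ m)²) ≥ 0`.
Taking expectations at `m = E X` kills the linear term and leaves `f(E X) + f''(0)/2 · Var X`. -/

open MeasureTheory

lemma rational_le_tangent_add_sq {Λ c₀ e₁ e₂ x m : ℝ} (hΛ : 0 < Λ) (hc₀ : 0 ≤ c₀)
    (he : c₀ * e₁ ≤ Λ * e₂) (hx : 0 ≤ x) (hm : 0 ≤ m) :
    (e₁ * x + e₂ * x ^ 2) / (Λ + c₀ * x) ≤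
      (e₁ * m + e₂ * m ^ 2) / (Λ + c₀ * m)
        + (e₁ * Λ + 2 * e₂ * Λ * m + e₂ * c₀ * m ^ 2) / (Λ + c₀ * m) ^ 2 * (x - m)
        + (Λ * e₂ - c₀ * e₁) / Λ ^ 2 * (x - m) ^ 2 := by
  have hdx : 0 < Λ + c₀ * x := by positivity
  have hdm : 0 < Λ + c₀ * m := by positivity
  have remainder_eq : (e₁ * m + e₂ * m ^ 2) / (Λ + c₀ * m)
        + (e₁ * Λ + 2 * e₂ * Λ * m + e₂ * c₀ * m ^ 2) / (Λ + c₀ * m) ^ 2 * (x - m)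
        + (Λ * e₂ - c₀ * e₁) / Λ ^ 2 * (x - m) ^ 2
        - (e₁ * x + e₂ * x ^ 2) / (Λ + c₀ * x)
      = (Λ * e₂ - c₀ * e₁) * (x - m) ^ 2 * ((Λ + c₀ * x) * (Λ + c₀ * m) ^ 2 - Λ ^ 3) /
          (Λ ^ 2 * ((Λ + c₀ * x) * (Λ + c₀ * m) ^ 2)) := by
    field_simp
    ring
  have hcoeff : 0 ≤ Λ * e₂ - c₀ * e₁ := sub_nonneg.mpr he
  have hcube : Λ ^ 3 ≤ (Λ + c₀ * x) * (Λ + c₀ * m) ^ 2 := by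
    calc Λ ^ 3 = Λ * Λ ^ 2 := by ring
      _ ≤ (Λ + c₀ * x) * (Λ + c₀ * m) ^ 2 := by
        gcongr <;> nlinarith [mul_nonneg hc₀ hx, mul_nonneg hc₀ hm]
  rw [← sub_nonneg, remainder_eq]
  have := sub_nonneg.mpr hcube
  positivity

section

variable {Ω : Type*} [MeasurableSpace Ω] {μ : Measure Ω}

lemma integrable_comp_of_ae_mem_isCompact [IsFiniteMeasure μ] {g : ℝ → ℝ} {K : Set ℝ}
    (hK : IsCompact K) (hgm : Measurable g) (hgc : ContinuousOn g K) {X : Ω → ℝ}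
    (hX : AEMeasurable X μ) (hXK : ∀ᵐ ω ∂μ, X ω ∈ K) : Integrable (fun ω => g (X ω)) μ := by
  obtain ⟨C, hC⟩ := hK.exists_bound_of_continuousOn hgc
  exact .of_bound (hgm.comp_aemeasurable hX).aestronglyMeasurable C
    (hXK.mono fun ω hω => hC _ hω)

lemma integral_le_of_le_quadratic_around_mean [IsProbabilityMeasure μ] {X : Ω → ℝ}
    {g : ℝ → ℝ} {a b c : ℝ} (hX : Integrable X μ)
    (hX2 : Integrable (fun ω => (X ω - ∫ ω', X ω' ∂μ) ^ 2) μ)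
    (hg : Integrable (fun ω => g (X ω)) μ)
    (hle : ∀ᵐ ω ∂μ,
      g (X ω) ≤ a + b * (X ω - ∫ ω', X ω' ∂μ) + c * (X ω - ∫ ω', X ω' ∂μ) ^ 2) :
    ∫ ω, g (X ω) ∂μ ≤ a + c * ∫ ω, (X ω - ∫ ω', X ω' ∂μ) ^ 2 ∂μ := by
  set m := ∫ ω, X ω ∂μ
  have hXm : Integrable (fun ω => X ω - m) μ := hX.sub (integrable_const m)
  have hcentered : ∫ ω, (X ω - m) ∂μ = 0 := by
    simp [integral_sub hX (integrable_const m), m]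
  have hlin : Integrable (fun ω => a + b * (X ω - m)) μ :=
    (integrable_const a).add (hXm.const_mul b)
  have hquad : Integrable (fun ω => a + b * (X ω - m) + c * (X ω - m) ^ 2) μ :=
    hlin.add (hX2.const_mul c)
  calc ∫ ω, g (X ω) ∂μ ≤ ∫ ω, (a + b * (X ω - m) + c * (X ω - m) ^ 2) ∂μ :=
        integral_mono_ae hg hquad hle
    _ = a + b * ∫ ω, (X ω - m) ∂μ + c * ∫ ω, (X ω - m) ^ 2 ∂μ := by
        rw [integral_add hlin (hX2.const_mul c),
          integral_add (integrable_const a) (hXm.const_mul b), integral_const,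
          integral_const_mul, integral_const_mul]
        simp
    _ = a + c * ∫ ω, (X ω - m) ^ 2 ∂μ := by rw [hcentered, mul_zero, add_zero]

end

theorem stmt_3_general {Ω : Type*} [MeasurableSpace Ω] (μ : Measure Ω) [IsProbabilityMeasure μ]
    (N Λ c₀ e₁ e₂ : ℝ) (hΛ : 0 < Λ) (hc₀ : 0 < c₀)
    (hΛe : c₀ * e₁ ≤ Λ * e₂)
    (X : Ω → ℝ) (hX : Integrable X μ)
    (hbdd : ∀ᵐ ω ∂μ, X ω ∈ Set.Icc 0 N) :
    (∫ ω, (e₁ * X ω + e₂ * X ω ^ 2) / (Λ + c₀ * X ω) ∂μ) ≤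
      (e₁ * (∫ ω, X ω ∂μ) + e₂ * (∫ ω, X ω ∂μ) ^ 2) / (Λ + c₀ * (∫ ω, X ω ∂μ)) +
        (2 * (Λ * e₂ - c₀ * e₁) / Λ ^ 2) *
          (∫ ω, (X ω - ∫ ω', X ω' ∂μ) ^ 2 ∂μ) / 2 := by
  set m := ∫ ω, X ω ∂μ
  set f : ℝ → ℝ := fun x => (e₁ * x + e₂ * x ^ 2) / (Λ + c₀ * x)
  have hm : 0 ≤ m := integral_nonneg_of_ae (hbdd.mono fun ω hω => hω.1)
  have hf : Integrable (fun ω => f (X ω)) μ := by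
    refine integrable_comp_of_ae_mem_isCompact isCompact_Icc (by fun_prop)
      (fun x hx => ContinuousAt.continuousWithinAt ?_) hX.aemeasurable hbdd
    have : Λ + c₀ * x ≠ 0 := by nlinarith [hx.1]
    fun_prop (disch := exact this)
  have hX2 : Integrable (fun ω => (X ω - m) ^ 2) μ :=
    integrable_comp_of_ae_mem_isCompact (g := fun x => (x - m) ^ 2) isCompact_Icc (by fun_prop)
      (by fun_prop) hX.aemeasurable hbdd
  have hcurv : 2 * (Λ * e₂ - c₀ * e₁) / Λ ^ 2 * (∫ ω, (X ω - m) ^ 2 ∂μ) / 2 =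
      (Λ * e₂ - c₀ * e₁) / Λ ^ 2 * ∫ ω, (X ω - m) ^ 2 ∂μ := by ring
  rw [hcurv]
  exact integral_le_of_le_quadratic_around_mean (g := f) hX hX2 hf
    (hbdd.mono fun ω hω => rational_le_tangent_add_sq hΛ hc₀.le hΛe hω.1 hm)

theorem stmt_3 {Ω : Type*} [MeasurableSpace Ω] (μ : Measure Ω) [IsProbabilityMeasure μ]
    (N Λ c₀ e₁ e₂ : ℝ) (hN : 0 < N) (hΛ : 0 < Λ) (hc₀ : 0 < c₀)
    (he₁ : 0 ≤ e₁) (he₂ : 0 ≤ e₂) (hΛe : c₀ * e₁ ≤ Λ * e₂)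
    (X : Ω → ℝ) (hX : Integrable X μ) (hX2 : Integrable (fun ω => X ω ^ 2) μ)
    (hbdd : ∀ᵐ ω ∂μ, X ω ∈ Set.Icc 0 N) :
    (∫ ω, (e₁ * X ω + e₂ * X ω ^ 2) / (Λ + c₀ * X ω) ∂μ) ≤
      (e₁ * (∫ ω, X ω ∂μ) + e₂ * (∫ ω, X ω ∂μ) ^ 2) / (Λ + c₀ * (∫ ω, X ω ∂μ)) +
        (2 * (Λ * e₂ - c₀ * e₁) / Λ ^ 2) *
          (∫ ω, (X ω - ∫ ω', X ω' ∂μ) ^ 2 ∂μ) / 2 :=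
  stmt_3_general μ N Λ c₀ e₁ e₂ hΛ hc₀ hΛe X hX hbdd
end

section
/- Let a ~ N(μ_a, σ_a²) and let y = a + ε with ε ~ N(0, τ²) independent of a. Let (a', y') be a second independent pair with a' ≡ 0, i.e., y' ~ N(0, τ²). For fixed prior weights p, p' > 0, the Bayes-optimal decision region {y : p·φ(y; μ_a, σ_a²+τ²) ≥ p'·φ(y; 0, τ²)} for deciding between the two models consists of points where the posterior probabilities are equal on the boundary, and the probability of correct classification P_correct = p∫_{R} φ(y; μ_a, σ_a²+τ²)dy + p'∫_{Rᶜ} φ(y; 0, τ²)dy is monotonically nondecreasing as τ² decreases, provided μ_a > 0. -/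
/-- The Gaussian probability density with mean `m` and variance `v`. -/
noncomputable def gaussPdf (m v y : ℝ) : ℝ :=
  (Real.sqrt (2 * Real.pi * v))⁻¹ * Real.exp (-((y - m) ^ 2) / (2 * v))

/-- The probability of correct MAP classification between class 2
(observation density `N(μa, σa² + t)`) and class 1 (density `N(0, t)`),
with prior weights `p` and `p'`, where `R` is the Bayes decision region
for class 2. -/
noncomputable def Pcorrect (μa σa2 p p' t : ℝ) : ℝ :=
  p * (∫ y in {y : ℝ | p' * gaussPdf 0 t y ≤ p * gaussPdf μa (σa2 + t) y},
        gaussPdf μa (σa2 + t) y) +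
  p' * (∫ y in {y : ℝ | p' * gaussPdf 0 t y ≤ p * gaussPdf μa (σa2 + t) y}ᶜ,
        gaussPdf 0 t y)

open MeasureTheory ContinuousLinearMap
open scoped Convolution

/-!
The MAP rule picks, at each observation `y`, the larger of the two weighted class densities,
so `Pcorrect = ∫ max (p φ₂) (p' φ₁)`. Raising the noise variance from `τ²` to `τ² + Δ` convolves
both class densities with the `N(0, Δ)` density `g`. Convolution with a nonnegative kernel is
monotone, so `max (g ⋆ a) (g ⋆ b) ≤ g ⋆ max a b`, and integrating against a kernel of total
mass one preserves the integral: extra noise can only garble the observation.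
-/

theorem setIntegral_add_setIntegral_compl_eq_integral_max {α : Type*} [MeasurableSpace α]
    {μ : Measure α} {a b : α → ℝ} (ha : Integrable a μ) (hb : Integrable b μ) :
    ∫ x in {x | b x ≤ a x}, a x ∂μ + ∫ x in {x | b x ≤ a x}ᶜ, b x ∂μ
      = ∫ x, max (a x) (b x) ∂μ := by
  have hs : NullMeasurableSet {x | b x ≤ a x} μ :=
    nullMeasurableSet_le hb.aemeasurable ha.aemeasurable
  have hmax : Integrable (fun x => max (a x) (b x)) μ := ha.sup hb
  rw [← integral_add_compl₀ hs hmax]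
  congr 1
  · exact setIntegral_congr_fun₀ hs fun x hx => (max_eq_left hx).symm
  · exact setIntegral_congr_fun₀ hs.compl fun x hx =>
      (max_eq_right (le_of_not_ge (Set.notMem_ofPred_iff.mp hx))).symm

section Convolution

variable {G : Type*} [MeasurableSpace G] [AddGroup G] [MeasurableAdd₂ G] [MeasurableNeg G]
  {μ : Measure G} [SFinite μ] [μ.IsAddRightInvariant]

theorem integral_max_convolution_le {g f₁ f₂ : G → ℝ} (hg_nonneg : ∀ x, 0 ≤ g x)
    (hg : Integrable g μ) (hf₁ : Integrable f₁ μ) (hf₂ : Integrable f₂ μ) :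
    ∫ x, max ((g ⋆[lsmul ℝ ℝ, μ] f₁) x) ((g ⋆[lsmul ℝ ℝ, μ] f₂) x) ∂μ
      ≤ (∫ x, g x ∂μ) * ∫ x, max (f₁ x) (f₂ x) ∂μ := by
  have hF : Integrable (fun x => max (f₁ x) (f₂ x)) μ := hf₁.sup hf₂
  have hconv : ∀ {f : G → ℝ}, Integrable f μ → ∀ᵐ x ∂μ, ConvolutionExistsAt g f x (lsmul ℝ ℝ) μ :=
    fun hf => hg.ae_convolution_exists _ hf
  calc ∫ x, max ((g ⋆[lsmul ℝ ℝ, μ] f₁) x) ((g ⋆[lsmul ℝ ℝ, μ] f₂) x) ∂μ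
      ≤ ∫ x, (g ⋆[lsmul ℝ ℝ, μ] fun y => max (f₁ y) (f₂ y)) x ∂μ := by
        refine integral_mono_ae
          ((hg.integrable_convolution _ hf₁).sup (hg.integrable_convolution _ hf₂))
          (hg.integrable_convolution _ hF) ?_
        filter_upwards [hconv hf₁, hconv hf₂, hconv hF] with x h₁ h₂ hmax
        exact max_le (convolution_mono_right h₁ hmax hg_nonneg fun y => le_max_left _ _)
          (convolution_mono_right h₂ hmax hg_nonneg fun y => le_max_right _ _)
    _ = (∫ x, g x ∂μ) * ∫ x, max (f₁ x) (f₂ x) ∂μ := by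
        rw [integral_convolution _ hg hF, lsmul_apply, smul_eq_mul]

end Convolution

theorem gaussPdf_eq_gaussianPDFReal (m : ℝ) {v : ℝ} (hv : 0 ≤ v) :
    gaussPdf m v = ProbabilityTheory.gaussianPDFReal m v.toNNReal := by
  ext y
  simp [gaussPdf, ProbabilityTheory.gaussianPDFReal, neg_div, hv]

theorem gaussPdf_nonneg (m : ℝ) {v : ℝ} (hv : 0 ≤ v) (y : ℝ) : 0 ≤ gaussPdf m v y := by
  rw [gaussPdf_eq_gaussianPDFReal m hv]
  exact ProbabilityTheory.gaussianPDFReal_nonneg _ _ _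

theorem integrable_gaussPdf (m : ℝ) {v : ℝ} (hv : 0 ≤ v) : Integrable (gaussPdf m v) := by
  rw [gaussPdf_eq_gaussianPDFReal m hv]
  exact ProbabilityTheory.integrable_gaussianPDFReal _ _

theorem integral_gaussPdf (m : ℝ) {v : ℝ} (hv : 0 < v) : ∫ y, gaussPdf m v y = 1 := by
  rw [gaussPdf_eq_gaussianPDFReal m hv.le]
  exact ProbabilityTheory.integral_gaussianPDFReal_eq_one m (by simpa using hv)

/-- Completing the square in `z`: the joint density of the noise `z` and the observation `y`
is the density of `y` times the conditional density of `z` given `y`. -/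
theorem gaussPdf_mul_gaussPdf (m : ℝ) {v w : ℝ} (hv : 0 < v) (hw : 0 < w) (y z : ℝ) :
    gaussPdf 0 w z * gaussPdf m v (y - z)
      = gaussPdf m (v + w) y * gaussPdf (w * (y - m) / (v + w)) (v * w / (v + w)) z := by
  have hπ := Real.pi_pos
  have hconst : (√(2 * Real.pi * w))⁻¹ * (√(2 * Real.pi * v))⁻¹
      = (√(2 * Real.pi * (v + w)))⁻¹ * (√(2 * Real.pi * (v * w / (v + w))))⁻¹ := by
    rw [← mul_inv, ← mul_inv, ← Real.sqrt_mul (by positivity), ← Real.sqrt_mul (by positivity)]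
    congr 2
    field_simp
  have hexp : -(z - 0) ^ 2 / (2 * w) + -(y - z - m) ^ 2 / (2 * v)
      = -(y - m) ^ 2 / (2 * (v + w))
        + -(z - w * (y - m) / (v + w)) ^ 2 / (2 * (v * w / (v + w))) := by
    field_simp
    ring
  calc gaussPdf 0 w z * gaussPdf m v (y - z)
      = ((√(2 * Real.pi * w))⁻¹ * (√(2 * Real.pi * v))⁻¹) *
          Real.exp (-(z - 0) ^ 2 / (2 * w) + -(y - z - m) ^ 2 / (2 * v)) := by
        rw [Real.exp_add]; unfold gaussPdf; ring
    _ = _ := by rw [hconst, hexp, Real.exp_add]; unfold gaussPdf; ring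

theorem gaussPdf_convolution_gaussPdf (m : ℝ) {v w : ℝ} (hv : 0 < v) (hw : 0 < w) :
    gaussPdf 0 w ⋆[lsmul ℝ ℝ] gaussPdf m v = gaussPdf m (v + w) := by
  ext y
  simp only [convolution_def, lsmul_apply, smul_eq_mul, gaussPdf_mul_gaussPdf m hv hw y]
  rw [integral_const_mul, integral_gaussPdf _ (by positivity), mul_one]

theorem Pcorrect_eq_integral_max (μa σa2 p p' : ℝ) {t : ℝ} (hσt : 0 ≤ σa2 + t) (ht : 0 ≤ t) :
    Pcorrect μa σa2 p p' t
      = ∫ y, max ((p • gaussPdf μa (σa2 + t)) y) ((p' • gaussPdf 0 t) y) := by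
  rw [Pcorrect, ← integral_const_mul, ← integral_const_mul]
  exact setIntegral_add_setIntegral_compl_eq_integral_max
    ((integrable_gaussPdf μa hσt).const_mul p) ((integrable_gaussPdf 0 ht).const_mul p')

theorem stmt_19_general (μa σa2 p p' : ℝ) (hσa2 : 0 < σa2)
    (τ2 τ2' : ℝ) (hτ2 : 0 < τ2) (hle : τ2 ≤ τ2') :
    Pcorrect μa σa2 p p' τ2' ≤ Pcorrect μa σa2 p p' τ2 := by
  rcases hle.eq_or_lt with rfl | hlt
  · exact le_rfl
  obtain ⟨Δ, hΔ, rfl⟩ : ∃ Δ, 0 < Δ ∧ τ2' = τ2 + Δ := ⟨τ2' - τ2, by linarith, by ring⟩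
  have hσt : 0 < σa2 + τ2 := by positivity
  have hnoise : ∀ (q m : ℝ) {v : ℝ}, 0 < v →
      gaussPdf 0 Δ ⋆[lsmul ℝ ℝ] (q • gaussPdf m v) = q • gaussPdf m (v + Δ) := fun q m v hv => by
    rw [convolution_smul, gaussPdf_convolution_gaussPdf m hv hΔ]
  rw [Pcorrect_eq_integral_max _ _ _ _ (by positivity) (by positivity),
    Pcorrect_eq_integral_max _ _ _ _ hσt.le hτ2.le, ← add_assoc, ← hnoise p μa hσt,
    ← hnoise p' 0 hτ2]
  calc _ ≤ (∫ z, gaussPdf 0 Δ z) * _ :=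
        integral_max_convolution_le (gaussPdf_nonneg 0 hΔ.le) (integrable_gaussPdf 0 hΔ.le)
          ((integrable_gaussPdf μa hσt.le).smul p) ((integrable_gaussPdf 0 hτ2.le).smul p')
    _ = _ := by rw [integral_gaussPdf 0 hΔ, one_mul]

/-- Two-class case of Proposition 2: the probability of correct MAP
classification is monotonically nonincreasing in the noise variance `τ²`
(equivalently, nondecreasing as the sensing effort `λ` increases). -/
theorem stmt_19 (μa σa2 p p' : ℝ) (hμa : 0 < μa) (hσa2 : 0 < σa2)
    (hp : 0 < p) (hp' : 0 < p') (hpp : p + p' = 1)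
    (τ2 τ2' : ℝ) (hτ2 : 0 < τ2) (hle : τ2 ≤ τ2') :
    Pcorrect μa σa2 p p' τ2' ≤ Pcorrect μa σa2 p p' τ2 :=
  stmt_19_general μa σa2 p p' hσa2 τ2 τ2' hτ2 hle
end
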